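/- Suppose α₀ > 0 and a function P : ℝ → Prop satisfies: P(α₀) holds, P is monotone (P(α) and α ≤ β implies P(β)), and whenever P(α) holds with α > 0, then P(max((1−δ)α, Cδ) + Cε) holds for all 0 < δ, ε ≤ 1, where C ≥ 1 is a fixed constant. Then P(α) holds for every α > 0. -/

import Mathlib

/-! At a fixed target scale `α > 0`, one step with `δ = α / (C + α)` (so that `C δ = (1 - δ) α`)
and `C ε ≤ δ α / 2` lowers every exponent `β ≥ α` by at least the fixed amount `δ α / 2`.
Finitely many such steps starting from `α₀` reach `α`. -/

theorem Monotone.of_forall_sub_of_le {P : ℝ → Prop} (hP : Monotone P) {a b c : ℝ} (hc : 0 < c)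
    (hb : P b) (hstep : ∀ β, a ≤ β → P β → P (β - c)) : P a := by
  have hiter : ∀ n : ℕ, P (max a (b - n * c)) := by
    intro n
    induction n with
    | zero => simpa using hP (le_max_right a b) hb
    | succ n ih =>
      refine hP ?_ (hstep _ (le_max_left _ _) ih)
      have h₁ := le_max_left a (b - (n + 1 : ℕ) * c)
      have h₂ := le_max_right a (b - (n + 1 : ℕ) * c)
      push_cast at h₁ h₂ ⊢
      rw [sub_le_iff_le_add]
      exact max_le (by linarith) (by linarith)
  obtain ⟨n, hn⟩ := exists_nat_gt ((b - a) / c)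
  have hreach : b - n * c ≤ a := by
    have := (div_lt_iff₀ hc).mp hn
    linarith
  simpa [max_eq_left hreach] using hiter n

theorem exists_step_le_sub {C α : ℝ} (hC : 0 < C) (hα : 0 < α) :
    ∃ δ ε c : ℝ, 0 < δ ∧ δ ≤ 1 ∧ 0 < ε ∧ ε ≤ 1 ∧ 0 < c ∧
      ∀ β, α ≤ β → max ((1 - δ) * β) (C * δ) + C * ε ≤ β - c := by
  have hCα : 0 < C + α := by linarith
  set δ := α / (C + α) with hδ_def
  have hδ : 0 < δ := div_pos hα hCα
  have hδ1 : δ ≤ 1 := (div_le_one hCα).mpr (by linarith)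
  have hCδ : C * δ = (1 - δ) * α := by
    rw [hδ_def]
    field_simp
    ring
  set c := δ * α / 2 with hc_def
  have hc : 0 < c := by positivity
  refine ⟨δ, min 1 (c / C), c, hδ, hδ1, lt_min one_pos (by positivity), min_le_left _ _, hc,
    fun β hβ => ?_⟩
  have hmax : max ((1 - δ) * β) (C * δ) = (1 - δ) * β :=
    max_eq_left (hCδ ▸ mul_le_mul_of_nonneg_left hβ (by linarith))
  have hCε : C * min 1 (c / C) ≤ c :=
    (mul_le_mul_of_nonneg_left (min_le_right _ _) hC.le).trans_eq (mul_div_cancel₀ c hC.ne')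
  rw [hmax]
  linarith [mul_le_mul_of_nonneg_left hβ hδ.le]

theorem induction_on_scales_general (C α₀ : ℝ) (hC : 1 ≤ C)
    (P : ℝ → Prop) (hbase : P α₀)
    (hmono : ∀ α β, P α → α ≤ β → P β)
    (hstep : ∀ α, P α → 0 < α → ∀ δ ε : ℝ, 0 < δ → δ ≤ 1 → 0 < ε → ε ≤ 1 →
      P (max ((1 - δ) * α) (C * δ) + C * ε)) :
    ∀ α : ℝ, 0 < α → P α := by
  intro α hα
  obtain ⟨δ, ε, c, hδ, hδ1, hε, hε1, hc, hdecrease⟩ := exists_step_le_sub (C := C) (by linarith) hα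
  have hP : Monotone P := fun a b hab h => hmono a b h hab
  exact hP.of_forall_sub_of_le hc hbase fun β hβ hPβ =>
    hmono _ _ (hstep β hPβ (hα.trans_le hβ) δ ε hδ hδ1 hε hε1) (hdecrease β hβ)

theorem induction_on_scales (C α₀ : ℝ) (hC : 1 ≤ C) (hα₀ : 0 < α₀)
    (P : ℝ → Prop) (hbase : P α₀)
    (hmono : ∀ α β, P α → α ≤ β → P β)
    (hstep : ∀ α, P α → 0 < α → ∀ δ ε : ℝ, 0 < δ → δ ≤ 1 → 0 < ε → ε ≤ 1 →
      P (max ((1 - δ) * α) (C * δ) + C * ε)) :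
    ∀ α : ℝ, 0 < α → P α :=
  induction_on_scales_general C α₀ hC P hbase hmono hstep
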